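/- arXiv:cs/0601107 — 2 statements merged into one kernel-verified Lean document; each statement's English description precedes it below -/
import Mathlib

section
/- For positive definite M×M complex matrices A, B and λ ∈ (0,1), equality det(λA + (1−λ)B) = det(A)^λ det(B)^{1−λ} holds if and only if A = B. -/
/-!
Write `A = C⋆C`. Then `B = C⋆DC` with `D` positive definite, and every determinant in the
identity picks up the same factor `|det C|²`, which reduces it to `A = 1`. There
`det(λ + (1-λ)D) = ∏ᵢ (λ + (1-λ)μᵢ)` over the eigenvalues `μᵢ > 0` of `D`, and weighted AM-GM
`μᵢ^(1-λ) ≤ λ + (1-λ)μᵢ`, strict unless `μᵢ = 1`, shows that equality forces `D = 1`.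
-/

open Matrix ComplexOrder

namespace Real

theorem prod_rpow_one_sub_lt_prod_add_mul {ι : Type*} [Fintype ι] {μ : ι → ℝ} (hμ : ∀ i, 0 < μ i)
    (hμ1 : μ ≠ 1) {l : ℝ} (hl0 : 0 < l) (hl1 : l < 1) :
    ∏ i, μ i ^ (1 - l) < ∏ i, (l + (1 - l) * μ i) := by
  have hl : l + (1 - l) = 1 := add_sub_cancel l 1
  obtain ⟨i, hi⟩ := Function.ne_iff.mp hμ1
  refine Finset.prod_lt_prod (fun j _ => rpow_pos_of_pos (hμ j) _) (fun j _ => ?_)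
    ⟨i, Finset.mem_univ i, ?_⟩
  · simpa using geom_mean_le_arith_mean2_weighted hl0.le (sub_nonneg.2 hl1.le) zero_le_one
      (hμ j).le hl
  · simpa using (geom_mean_lt_arith_mean2_weighted_iff_of_pos hl0 (sub_pos.2 hl1) zero_le_one
      (hμ i).le hl).2 (Ne.symm hi)

end Real

namespace Matrix

variable {n 𝕜 : Type*} [Fintype n] [DecidableEq n] [RCLike 𝕜]

theorem re_det_star_mul_mul (C X : Matrix n n 𝕜) :
    RCLike.re (star C * X * C).det = ‖C.det‖ ^ 2 * RCLike.re X.det := by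
  rw [det_mul, det_mul, star_eq_conjTranspose, det_conjTranspose, mul_comm _ X.det, mul_assoc,
    ← starRingEnd_apply, RCLike.conj_mul, ← RCLike.ofReal_pow, mul_comm, RCLike.re_ofReal_mul]

theorem IsHermitian.det_cfc {A : Matrix n n 𝕜} (hA : A.IsHermitian) (f : ℝ → ℝ) :
    (cfc f A).det = ∏ i, (f (hA.eigenvalues i) : 𝕜) := by
  rw [hA.cfc_eq, IsHermitian.cfc]
  simp [-Unitary.conjStarAlgAut_apply]

theorem IsHermitian.eq_one_of_eigenvalues_eq_one {A : Matrix n n 𝕜} (hA : A.IsHermitian)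
    (h : hA.eigenvalues = 1) : A = 1 := by
  rw [hA.spectral_theorem, h]
  simp

theorem IsHermitian.smul_one_add_smul_eq_cfc {A : Matrix n n 𝕜} (hA : A.IsHermitian) (a b : ℝ) :
    a • 1 + b • A = cfc (fun x => a + b * x) A := by
  rw [cfc_const_add a _ A, cfc_const_mul_id b A, Algebra.algebraMap_eq_smul_one]

theorem PosDef.re_det_rpow_lt_re_det_smul_one_add_smul {D : Matrix n n 𝕜} (hD : D.PosDef)
    (hD1 : D ≠ 1) {l : ℝ} (hl0 : 0 < l) (hl1 : l < 1) :
    RCLike.re D.det ^ (1 - l) < RCLike.re (l • 1 + (1 - l) • D).det := by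
  have hμ1 : hD.1.eigenvalues ≠ 1 := fun h => hD1 (hD.1.eq_one_of_eigenvalues_eq_one h)
  rw [hD.1.smul_one_add_smul_eq_cfc, hD.1.det_cfc, hD.1.det_eq_prod_eigenvalues,
    ← RCLike.ofReal_prod, ← RCLike.ofReal_prod, RCLike.ofReal_re, RCLike.ofReal_re,
    ← Real.finsetProd_rpow _ _ fun i _ => (hD.eigenvalues_pos i).le]
  exact Real.prod_rpow_one_sub_lt_prod_add_mul hD.eigenvalues_pos hμ1 hl0 hl1

theorem PosDef.re_det_rpow_mul_re_det_rpow_lt {A B : Matrix n n 𝕜} (hA : A.PosDef)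
    (hB : B.PosDef) (hAB : A ≠ B) {l : ℝ} (hl0 : 0 < l) (hl1 : l < 1) :
    RCLike.re A.det ^ l * RCLike.re B.det ^ (1 - l) < RCLike.re (l • A + (1 - l) • B).det := by
  open scoped MatrixOrder in
  obtain ⟨C, rfl⟩ := CStarAlgebra.nonneg_iff_eq_star_mul_self.mp hA.posSemidef.nonneg
  have hC : IsUnit C := isUnit_of_mul_isUnit_right hA.isUnit
  have hCdet : IsUnit C.det := (isUnit_iff_isUnit_det C).mp hC
  obtain ⟨D, rfl⟩ : ∃ D, B = star C * D * C := ⟨star C⁻¹ * B * C⁻¹, by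
    rw [← mul_assoc, ← mul_assoc, ← star_mul, nonsing_inv_mul C hCdet, star_one, one_mul,
      mul_assoc, nonsing_inv_mul C hCdet, mul_one]⟩
  have hD : D.PosDef := hC.posDef_star_left_conjugate_iff.mp hB
  have hD1 : D ≠ 1 := by rintro rfl; simp at hAB
  have hconv : l • (star C * C) + (1 - l) • (star C * D * C)
      = star C * (l • 1 + (1 - l) • D) * C := by
    simp only [mul_add, add_mul, mul_smul_comm, smul_mul_assoc, mul_one]
  have hAC : star C * C = star C * 1 * C := by rw [mul_one]
  have hc : 0 < ‖C.det‖ ^ 2 := by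
    have := hCdet.ne_zero
    positivity
  have hdetD : 0 ≤ RCLike.re D.det := (RCLike.pos_iff.mp hD.det_pos).1.le
  rw [hconv, hAC, re_det_star_mul_mul, re_det_star_mul_mul, re_det_star_mul_mul, det_one,
    RCLike.one_re, mul_one]
  calc (‖C.det‖ ^ 2) ^ l * (‖C.det‖ ^ 2 * RCLike.re D.det) ^ (1 - l)
      = ‖C.det‖ ^ 2 * RCLike.re D.det ^ (1 - l) := by
        rw [Real.mul_rpow hc.le hdetD, ← mul_assoc, ← Real.rpow_add hc, add_sub_cancel,
          Real.rpow_one]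
    _ < _ := mul_lt_mul_of_pos_left (hD.re_det_rpow_lt_re_det_smul_one_add_smul hD1 hl0 hl1) hc

end Matrix

/-- Equality case of log-concavity of the determinant on positive definite complex
matrices: `det(λA + (1−λ)B) = det(A)^λ det(B)^{1−λ}` iff `A = B`. -/
theorem stmt8 (M : ℕ) (A B : Matrix (Fin M) (Fin M) ℂ)
    (hA : A.PosDef) (hB : B.PosDef) (l : ℝ) (hl0 : 0 < l) (hl1 : l < 1) :
    ((l : ℂ) • A + ((1 - l : ℝ) : ℂ) • B).det.re
      = A.det.re ^ l * B.det.re ^ (1 - l) ↔ A = B := by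
  simp only [Complex.coe_smul, ← RCLike.re_to_complex]
  constructor
  · intro h
    by_contra hAB
    exact (hA.re_det_rpow_mul_re_det_rpow_lt hB hAB hl0 hl1).ne' h
  · rintro rfl
    rw [← add_smul, add_sub_cancel, one_smul, ← Real.rpow_add (RCLike.pos_iff.mp hA.det_pos).1,
      add_sub_cancel, Real.rpow_one]
end

section
/- Let H be an M×N complex matrix and Q⁽¹⁾, Q⁽²⁾ be N×N positive semidefinite matrices with σ² > 0. If det(1_M + H((Q⁽¹⁾+Q⁽²⁾)/2)Hᴴ/σ²) = det(1_M + HQ⁽¹⁾Hᴴ/σ²)^{1/2} · det(1_M + HQ⁽²⁾Hᴴ/σ²)^{1/2}, then HQ⁽¹⁾Hᴴ = HQ⁽²⁾Hᴴ. -/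
/-!
Write `A = S * S` with `S` Hermitian and invertible, and `B = S * C * S` with
`C = S⁻¹ * B * S⁻¹` positive definite. Then `det ((A + B) / 2) = det A * det ((1 + C) / 2)` and
`√(det A * det B) = det A * √(det C)`, so equality says `∏ (1 + λᵢ) / 2 = ∏ √λᵢ` over the
eigenvalues `λᵢ > 0` of `C`. Termwise AM–GM forces every `λᵢ = 1`, i.e. `C = 1` and `A = B`.
-/

open Matrix ComplexOrder

lemma Real.rpow_half_le_one_add_div_two {x : ℝ} (hx : 0 ≤ x) :
    x ^ (1 / 2 : ℝ) ≤ (1 + x) / 2 := by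
  have := Real.geom_mean_le_arith_mean2_weighted (p₁ := 1) (by norm_num : (0 : ℝ) ≤ 1 / 2)
    (by norm_num : (0 : ℝ) ≤ 1 / 2) zero_le_one hx (by norm_num)
  rw [Real.one_rpow, one_mul] at this
  linarith

lemma Real.rpow_half_lt_one_add_div_two {x : ℝ} (hx : 0 ≤ x) (h : x ≠ 1) :
    x ^ (1 / 2 : ℝ) < (1 + x) / 2 := by
  have := (Real.geom_mean_lt_arith_mean2_weighted_iff_of_pos (p₁ := 1)
    (by norm_num : (0 : ℝ) < 1 / 2) (by norm_num : (0 : ℝ) < 1 / 2) zero_le_one hx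
    (by norm_num)).2 (Ne.symm h)
  rw [Real.one_rpow, one_mul] at this
  linarith

namespace Matrix

variable {n 𝕜 : Type*} [Fintype n] [DecidableEq n] [RCLike 𝕜]

theorem det_conjStarAlgAut (U : unitary (Matrix n n 𝕜)) (X : Matrix n n 𝕜) :
    (Unitary.conjStarAlgAut 𝕜 _ U X).det = X.det := by
  rw [Unitary.conjStarAlgAut_apply, det_mul_right_comm, Unitary.mul_star_self_of_mem U.2,
    one_mul]

theorem IsHermitian.det_half_one_add {C : Matrix n n 𝕜} (hC : C.IsHermitian) :
    (((1 : 𝕜) / 2) • (1 + C)).det = ∏ i, (((1 + hC.eigenvalues i) / 2 : ℝ) : 𝕜) := by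
  conv_lhs => rw [hC.spectral_theorem]
  rw [← map_one (Unitary.conjStarAlgAut 𝕜 _ hC.eigenvectorUnitary), ← map_add, ← map_smul,
    det_conjStarAlgAut, ← diagonal_one, diagonal_add, ← diagonal_smul, det_diagonal]
  push_cast
  simp [div_eq_inv_mul]

theorem PosDef.eq_one_of_re_det_half_one_add_eq_rpow {C : Matrix n n 𝕜} (hC : C.PosDef)
    (h : RCLike.re (((1 : 𝕜) / 2) • (1 + C)).det = RCLike.re C.det ^ (1 / 2 : ℝ)) :
    C = 1 := by
  have hpos := hC.eigenvalues_pos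
  have hprod : ∏ i, hC.1.eigenvalues i ^ (1 / 2 : ℝ) = ∏ i, (1 + hC.1.eigenvalues i) / 2 := by
    rw [hC.1.det_half_one_add, hC.1.det_eq_prod_eigenvalues] at h
    simp only [← RCLike.ofReal_prod, RCLike.ofReal_re] at h
    rw [h, Real.finsetProd_rpow _ _ fun i _ ↦ (hpos i).le]
  have hone : ∀ i, hC.1.eigenvalues i = 1 := by
    by_contra! ⟨j, hj⟩
    refine hprod.not_lt (Finset.prod_lt_prod (fun i _ ↦ Real.rpow_pos_of_pos (hpos i) _)
      (fun i _ ↦ Real.rpow_half_le_one_add_div_two (hpos i).le) ⟨j, Finset.mem_univ j, ?_⟩)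
    exact Real.rpow_half_lt_one_add_div_two (hpos j).le hj
  have hdiag : diagonal (RCLike.ofReal ∘ hC.1.eigenvalues) = (1 : Matrix n n 𝕜) := by
    rw [← diagonal_one]
    congr 1
    ext i
    simp [hone i]
  rw [hC.1.spectral_theorem, hdiag, map_one]

open scoped MatrixOrder in
theorem PosDef.exists_isUnit_isHermitian_mul_self_eq {A : Matrix n n 𝕜} (hA : A.PosDef) :
    ∃ S : Matrix n n 𝕜, IsUnit S ∧ S.IsHermitian ∧ S * S = A := by
  have hSS := CFC.sqrt_mul_sqrt_self A hA.posSemidef.nonneg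
  refine ⟨CFC.sqrt A, ?_, (CFC.sqrt_nonneg A).posSemidef.1, hSS⟩
  rw [isUnit_iff_isUnit_det, isUnit_iff_ne_zero]
  intro h
  have := hA.det_pos.ne'
  rw [← hSS, det_mul, h, zero_mul] at this
  exact this rfl

theorem PosDef.eq_of_re_det_midpoint_eq_geom_mean {A B : Matrix n n 𝕜} (hA : A.PosDef)
    (hB : B.PosDef) (h : RCLike.re (((1 : 𝕜) / 2) • (A + B)).det
      = RCLike.re A.det ^ (1 / 2 : ℝ) * RCLike.re B.det ^ (1 / 2 : ℝ)) : A = B := by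
  obtain ⟨S, hSu, hSH, rfl⟩ := hA.exists_isUnit_isHermitian_mul_self_eq
  have hSdet := (isUnit_iff_isUnit_det S).1 hSu
  set C := S⁻¹ * B * S⁻¹
  have hC : C.PosDef := by
    simpa only [C, star_eq_conjTranspose, hSH.inv.eq] using
      (IsUnit.posDef_star_left_conjugate_iff (isUnit_nonsing_inv_iff.2 hSu)).2 hB
  have hBC : S * C * S = B := by
    simp only [C, Matrix.mul_assoc, nonsing_inv_mul S hSdet, mul_one]
    simp [← Matrix.mul_assoc, mul_nonsing_inv S hSdet]
  have hmid : ((1 : 𝕜) / 2) • (S * S + B) = S * (((1 : 𝕜) / 2) • (1 + C)) * S := by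
    rw [← hBC]
    simp only [Matrix.mul_add, Matrix.add_mul, Matrix.mul_smul, Matrix.smul_mul, Matrix.mul_one]
  have hdet (X : Matrix n n 𝕜) : (S * X * S).det = (S * S).det * X.det := by
    rw [det_mul_right_comm, det_mul]
  obtain ⟨a, ha, hadet⟩ := RCLike.pos_iff_exists_ofReal.1 hA.det_pos
  rw [hmid, ← hBC, hdet, hdet, ← hadet, RCLike.re_ofReal_mul, RCLike.re_ofReal_mul,
    RCLike.ofReal_re, Real.mul_rpow ha.le (RCLike.pos_iff.1 hC.det_pos).1.le, ← mul_assoc,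
    ← Real.sqrt_eq_rpow, Real.mul_self_sqrt ha.le] at h
  rw [← hBC, hC.eq_one_of_re_det_half_one_add_eq_rpow (mul_left_cancel₀ ha.ne' h),
    Matrix.mul_one]

end Matrix

/-- Equality in the log-concavity of the determinant for the capacity functional forces
`HQ⁽¹⁾Hᴴ = HQ⁽²⁾Hᴴ` (deterministic core of Lemma 2.2). -/
theorem stmt9 (M N : ℕ) (H : Matrix (Fin M) (Fin N) ℂ)
    (Q1 Q2 : Matrix (Fin N) (Fin N) ℂ) (hQ1 : Q1.PosSemidef) (hQ2 : Q2.PosSemidef)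
    (σ2 : ℝ) (hσ : 0 < σ2)
    (heq : ((1 : Matrix (Fin M) (Fin M) ℂ) +
        ((σ2 : ℂ))⁻¹ • (H * (((1 : ℂ) / 2) • (Q1 + Q2)) * Hᴴ)).det.re
      = ((1 : Matrix (Fin M) (Fin M) ℂ) + ((σ2 : ℂ))⁻¹ • (H * Q1 * Hᴴ)).det.re ^ ((1 : ℝ) / 2)
        * ((1 : Matrix (Fin M) (Fin M) ℂ) + ((σ2 : ℂ))⁻¹ • (H * Q2 * Hᴴ)).det.re ^ ((1 : ℝ) / 2)) :
    H * Q1 * Hᴴ = H * Q2 * Hᴴ := by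
  have hσinv : 0 ≤ ((σ2 : ℂ))⁻¹ := inv_nonneg.2 (Complex.zero_le_real.2 hσ.le)
  have hposDef {Q : Matrix (Fin N) (Fin N) ℂ} (hQ : Q.PosSemidef) :
      (1 + ((σ2 : ℂ))⁻¹ • (H * Q * Hᴴ)).PosDef :=
    PosDef.one.add_posSemidef ((hQ.mul_mul_conjTranspose_same H).smul hσinv)
  have hmid : (1 : Matrix (Fin M) (Fin M) ℂ) + ((σ2 : ℂ))⁻¹ • (H * (((1 : ℂ) / 2) • (Q1 + Q2)) * Hᴴ)
      = ((1 : ℂ) / 2) •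
        ((1 + ((σ2 : ℂ))⁻¹ • (H * Q1 * Hᴴ)) + (1 + ((σ2 : ℂ))⁻¹ • (H * Q2 * Hᴴ))) := by
    rw [Matrix.mul_smul, Matrix.smul_mul, Matrix.mul_add, Matrix.add_mul]
    module
  rw [hmid] at heq
  have h := add_left_cancel ((hposDef hQ1).eq_of_re_det_midpoint_eq_geom_mean (hposDef hQ2) heq)
  exact smul_right_injective _ (inv_ne_zero (Complex.ofReal_ne_zero.2 hσ.ne')) h
end
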